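/- Let π = π_1π_2⋯π_n be a permutation of {1,...,n} and define L(π) = π_{i+1}⋯π_n π_1⋯π_i where π_i = 1 is the minimum entry, and R(π) = π_j⋯π_n π_1⋯π_{j−1} where π_j = n is the maximum entry. Then: (1) if π_1 = n, then c321(π) = c321(L(π)); (2) if π_n = 1, then c321(π) = c321(R(π)). -/

import Mathlib

open Finset

namespace PermStats

variable {n : ℕ}

/-- Number of left-to-right maxima of the permutation `π` (viewed as the
sequence `π 0, π 1, …, π (n-1)`). -/
def lrmax (π : Equiv.Perm (Fin n)) : ℕ :=
  (univ.filter (fun i : Fin n => ∀ j, j < i → π j < π i)).card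

/-- Number of left-to-right minima. -/
def lrmin (π : Equiv.Perm (Fin n)) : ℕ :=
  (univ.filter (fun i : Fin n => ∀ j, j < i → π i < π j)).card

/-- Number of right-to-left maxima. -/
def rlmax (π : Equiv.Perm (Fin n)) : ℕ :=
  (univ.filter (fun i : Fin n => ∀ j, i < j → π j < π i)).card

/-- Number of right-to-left minima. -/
def rlmin (π : Equiv.Perm (Fin n)) : ℕ :=
  (univ.filter (fun i : Fin n => ∀ j, i < j → π i < π j)).card

/-- `wnm π` counts indices that are weak excedances (`π i ≥ i`) and
non-mid-points (there are no `j < i < k` with `π j > π i > π k`). -/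
def wnm (π : Equiv.Perm (Fin n)) : ℕ :=
  (univ.filter (fun i : Fin n =>
    i ≤ π i ∧ ¬ ∃ j k : Fin n, j < i ∧ i < k ∧ π i < π j ∧ π k < π i)).card

/-- `rlm π` counts the right-to-left maxima of the subword of `π` strictly to
the left of the position `k` of the smallest value. -/
def rlm (π : Equiv.Perm (Fin n)) : ℕ :=
  (univ.filter (fun i : Fin n =>
    ∃ k : Fin n, (π k : ℕ) = 0 ∧ i < k ∧ ∀ j, i < j → j < k → π j < π i)).card

/-- Number of descents. -/
def des (π : Equiv.Perm (Fin n)) : ℕ :=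
  (univ.filter (fun i : Fin n => ∃ j : Fin n, (j : ℕ) = (i : ℕ) + 1 ∧ π j < π i)).card

/-- Number of ascents. -/
def asc (π : Equiv.Perm (Fin n)) : ℕ :=
  (univ.filter (fun i : Fin n => ∃ j : Fin n, (j : ℕ) = (i : ℕ) + 1 ∧ π i < π j)).card

/-- Number of descents of the inverse. -/
def ides (π : Equiv.Perm (Fin n)) : ℕ := des π⁻¹

/-- Number of occurrences of the consecutive pattern `321`. -/
def c321 (π : Equiv.Perm (Fin n)) : ℕ :=
  (univ.filter (fun i : Fin n => ∃ j k : Fin n,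
    (j : ℕ) = (i : ℕ) + 1 ∧ (k : ℕ) = (i : ℕ) + 2 ∧ π j < π i ∧ π k < π j)).card

/-- `π` avoids the (classical) pattern `321`. -/
def Avoids321 (π : Equiv.Perm (Fin n)) : Prop :=
  ¬ ∃ i j k : Fin n, i < j ∧ j < k ∧ π k < π j ∧ π j < π i

end PermStats

open PermStats

/-- `L(π)`: the cyclic rotation of the sequence `π` placing the entries after
the minimum first and ending with the minimum:
`L(π) t = π (t + i + 1)` where `π i` is the minimum entry. -/
def Lrot {n : ℕ} (π : Equiv.Perm (Fin (n + 1))) : Equiv.Perm (Fin (n + 1)) :=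
  π * Equiv.addLeft (π.symm 0 + 1)

/-- `R(π)`: the cyclic rotation of the sequence `π` beginning with the maximum:
`R(π) t = π (t + j)` where `π j` is the maximum entry. -/
def Rrot {n : ℕ} (π : Equiv.Perm (Fin (n + 1))) : Equiv.Perm (Fin (n + 1)) :=
  π * Equiv.addLeft (π.symm (Fin.last n))

open Fin.CommRing

/-- Cyclic count of consecutive 321 occurrences. -/
def cyc321 {n : ℕ} (σ : Equiv.Perm (Fin (n + 1))) : ℕ :=
  (univ.filter (fun i : Fin (n + 1) => σ (i + 1) < σ i ∧ σ (i + 2) < σ (i + 1))).card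

lemma c321_eq_filter {n : ℕ} (σ : Equiv.Perm (Fin (n + 1))) :
    c321 σ = (univ.filter (fun i : Fin (n + 1) =>
      (i : ℕ) + 2 ≤ n ∧ σ (i + 1) < σ i ∧ σ (i + 2) < σ (i + 1))).card := by
  unfold c321
  congr 1
  apply Finset.filter_congr
  intro i _
  constructor
  · rintro ⟨j, k, hj, hk, h1, h2⟩
    have hk' := k.isLt
    have hle : (i : ℕ) + 2 ≤ n := by omega
    have h1lt : i < Fin.last n := by
      rw [Fin.lt_iff_val_lt_val, Fin.val_last]; omega
    have hv1 : ((i + 1 : Fin (n + 1)) : ℕ) = (i : ℕ) + 1 := Fin.val_add_one_of_lt h1lt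
    have h2lt : (i + 1 : Fin (n + 1)) < Fin.last n := by
      rw [Fin.lt_iff_val_lt_val, Fin.val_last, hv1]; omega
    have hv2 : ((i + 2 : Fin (n + 1)) : ℕ) = (i : ℕ) + 2 := by
      have : (i + 2 : Fin (n + 1)) = (i + 1) + 1 := by ring
      rw [this, Fin.val_add_one_of_lt h2lt, hv1]
    have hje : j = i + 1 := Fin.ext (by omega)
    have hke : k = i + 2 := Fin.ext (by omega)
    subst hje hke
    exact ⟨hle, h1, h2⟩
  · rintro ⟨hle, h1, h2⟩
    have h1lt : i < Fin.last n := by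
      rw [Fin.lt_iff_val_lt_val, Fin.val_last]; omega
    have hv1 : ((i + 1 : Fin (n + 1)) : ℕ) = (i : ℕ) + 1 := Fin.val_add_one_of_lt h1lt
    have h2lt : (i + 1 : Fin (n + 1)) < Fin.last n := by
      rw [Fin.lt_iff_val_lt_val, Fin.val_last, hv1]; omega
    have hv2 : ((i + 2 : Fin (n + 1)) : ℕ) = (i : ℕ) + 2 := by
      have : (i + 2 : Fin (n + 1)) = (i + 1) + 1 := by ring
      rw [this, Fin.val_add_one_of_lt h2lt, hv1]
    exact ⟨i + 1, i + 2, hv1, hv2, h1, h2⟩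

/-- If no 321 occurrence wraps around, the linear and cyclic counts agree. -/
lemma c321_eq_cyc321_of {n : ℕ} (σ : Equiv.Perm (Fin (n + 1)))
    (h : ∀ i : Fin (n + 1), σ (i + 1) < σ i ∧ σ (i + 2) < σ (i + 1) → (i : ℕ) + 2 ≤ n) :
    c321 σ = cyc321 σ := by
  rw [c321_eq_filter]
  unfold cyc321
  congr 1
  apply Finset.filter_congr
  intro i _
  constructor
  · rintro ⟨_, h1, h2⟩; exact ⟨h1, h2⟩
  · intro hc; exact ⟨h i hc, hc.1, hc.2⟩

lemma fin_last_cases {n : ℕ} (i : Fin (n + 1)) (h : ¬ ((i : ℕ) + 2 ≤ n)) :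
    i = Fin.last n ∨ ((i : ℕ) = n - 1 ∧ 1 ≤ n) := by
  have := i.isLt
  by_cases hn : (i : ℕ) = n
  · exact Or.inl (Fin.ext (by simp [hn]))
  · exact Or.inr ⟨by omega, by omega⟩

lemma add_one_eq_zero_last {n : ℕ} : (Fin.last n + 1 : Fin (n + 1)) = 0 := by
  apply Fin.ext
  simp [Fin.add_def]

lemma val_one_mod {n : ℕ} : ((1 : Fin (n + 1)) : ℕ) = 1 % (n + 1) := by
  exact Fin.val_one' (n+1)

lemma pred_add_one {n : ℕ} (i : Fin (n + 1)) (hi : (i : ℕ) = n - 1) (hn : 1 ≤ n) :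
    i + 1 = Fin.last n := by
  apply Fin.ext
  rw [Fin.val_add, val_one_mod, hi, Fin.val_last]
  have h1 : 1 % (n + 1) = 1 := Nat.mod_eq_of_lt (by omega)
  rw [h1]
  have : n - 1 + 1 = n := by omega
  rw [this]
  exact Nat.mod_eq_of_lt (by omega)

lemma pred_add_two {n : ℕ} (i : Fin (n + 1)) (hi : (i : ℕ) = n - 1) (hn : 1 ≤ n) :
    i + 2 = 0 := by
  have : (i + 2 : Fin (n + 1)) = (i + 1) + 1 := by ring
  rw [this, pred_add_one i hi hn, add_one_eq_zero_last]

/-- If the first entry is the maximum, no 321 occurrence wraps. -/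
lemma c321_eq_cyc321_of_first_max {n : ℕ} (σ : Equiv.Perm (Fin (n + 1)))
    (h : σ 0 = Fin.last n) : c321 σ = cyc321 σ := by
  apply c321_eq_cyc321_of
  intro i ⟨h1, h2⟩
  by_contra hc
  rcases fin_last_cases i hc with he | ⟨he, hn⟩
  · subst he
    rw [add_one_eq_zero_last, h] at h1
    exact (Fin.le_last _).not_gt h1
  · rw [pred_add_two i he hn, h] at h2
    exact (Fin.le_last _).not_gt h2

/-- If the last entry is the minimum, no 321 occurrence wraps. -/
lemma c321_eq_cyc321_of_last_min {n : ℕ} (σ : Equiv.Perm (Fin (n + 1)))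
    (h : σ (Fin.last n) = 0) : c321 σ = cyc321 σ := by
  apply c321_eq_cyc321_of
  intro i ⟨h1, h2⟩
  by_contra hc
  rcases fin_last_cases i hc with he | ⟨he, hn⟩
  · subst he
    rw [add_one_eq_zero_last, h] at h1
    exact (Fin.zero_le _).not_gt h1
  · rw [pred_add_one i he hn, h] at h2
    exact (Fin.zero_le _).not_gt h2

/-- cyclic 321-count is invariant under rotation. -/
lemma cyc321_rot {n : ℕ} (π : Equiv.Perm (Fin (n + 1))) (c : Fin (n + 1)) :
    cyc321 (π * Equiv.addLeft c) = cyc321 π := by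
  unfold cyc321
  apply Finset.card_bij' (fun i _ => c + i) (fun j _ => j - c)
  · intro i hi
    simp only [mem_filter, mem_univ, true_and] at hi ⊢
    have e1 : c + (i + 1) = (c + i) + 1 := by ring
    have e2 : c + (i + 2) = (c + i) + 2 := by ring
    simpa [Equiv.Perm.mul_apply, e1, e2] using hi
  · intro j hj
    simp only [mem_filter, mem_univ, true_and] at hj ⊢
    have e0 : c + (j - c) = j := by ring
    have e1 : c + (j - c + 1) = j + 1 := by ring
    have e2 : c + (j - c + 2) = j + 2 := by ring
    simpa [Equiv.Perm.mul_apply, e0, e1, e2] using hj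
  · intro i _; ring
  · intro j _; ring

/-- If the first entry of `π` is the maximum then `c321 π = c321 (L π)`;
if the last entry of `π` is the minimum then `c321 π = c321 (R π)`. -/
theorem stmt11 (n : ℕ) (π : Equiv.Perm (Fin (n + 1))) :
    (π 0 = Fin.last n → c321 π = c321 (Lrot π)) ∧
    (π (Fin.last n) = 0 → c321 π = c321 (Rrot π)) := by
  constructor
  · intro h
    have hlast : (Lrot π) (Fin.last n) = 0 := by
      show π (Equiv.addLeft (π.symm 0 + 1) (Fin.last n)) = 0
      have : (Equiv.addLeft (π.symm 0 + 1) (Fin.last n)) = π.symm 0 := by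
        simp only [Equiv.coe_addLeft]
        have : (π.symm 0 + 1) + Fin.last n = π.symm 0 + (1 + Fin.last n) := by ring
        rw [this, add_comm 1 (Fin.last n), add_one_eq_zero_last, add_zero]
      rw [this, Equiv.apply_symm_apply]
    rw [c321_eq_cyc321_of_first_max π h, c321_eq_cyc321_of_last_min _ hlast,
      Lrot, cyc321_rot]
  · intro h
    have hfirst : (Rrot π) 0 = Fin.last n := by
      show π (Equiv.addLeft (π.symm (Fin.last n)) 0) = Fin.last n
      simp
    rw [c321_eq_cyc321_of_last_min π h, c321_eq_cyc321_of_first_max _ hfirst,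
      Rrot, cyc321_rot]
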